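/- arXiv:0912.0442 — 3 statements merged into one kernel-verified Lean document; each statement's English description precedes it below -/
import Mathlib

section
/- Let φ ⊂ V* be a root system and (G, (U_α)) a root datum with a family of functions φ_α : U_α → ℝ ∪ {∞} with φ_α⁻¹{∞} = {e}. Suppose there exists an affine space A under V, a point o ∈ A, and an action of N on A by affine automorphisms such that for every α ∈ φ and u ∈ U_α \ {e}, n(u) acts as the reflection with fixed hyperplane M(α, φ_α(u)) = {x ∈ A : α(ox→) + φ_α(u) = 0} whose linear part is r_α. Then the family (φ_α) satisfies axiom (V2.1): φ_{r_α β}(n(u)·v·n(u)⁻¹) = φ_β(v) − ⟨α,β⟩φ_α(u). -/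
/-!
The mirror of `n(u)` is `M(α, φ_α(u))`, and `n(u) n(w) n(u)⁻¹` fixes `n(u) · x` whenever `n(w)`
fixes `x`. Taking for `x` the point `o - (φ_β(w)/2) β^∨` of the mirror of `n(w)`, the point
`n(u) · x` lies on the mirror of `n(n(u) w n(u)⁻¹)`, i.e. `r_α β` takes the value
`-φ_{r_α β}(n(u) w n(u)⁻¹)` there; evaluating `r_α β = β - ⟨α, β⟩ α` at `n(u) · x` gives (V2.1).
-/

section AffineReflection

variable {V A : Type*} [AddCommGroup V] [Module ℝ V] [AddTorsor V A]

/-- The reflection in the hyperplane `{x | f (x -ᵥ o) + k = 0}` along `c`, when `f c = 2`. -/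
def affineReflection (f : V →ₗ[ℝ] ℝ) (c : V) (o : A) (k : ℝ) (x : A) : A :=
  (-(f (x -ᵥ o) + k)) • c +ᵥ x

variable {f : V →ₗ[ℝ] ℝ} {c : V} {o : A} {k : ℝ}

theorem affineReflection_vsub (x : A) :
    affineReflection f c o k x -ᵥ o = (-(f (x -ᵥ o) + k)) • c + (x -ᵥ o) :=
  vadd_vsub_assoc _ _ _

theorem affineReflection_eq_self_iff (hfc : f c = 2) {x : A} :
    affineReflection f c o k x = x ↔ f (x -ᵥ o) = -k := by
  have hc : c ≠ 0 := fun h => by simp [h] at hfc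
  rw [affineReflection, eq_comm, eq_vadd_iff_vsub_eq, vsub_self, eq_comm, smul_eq_zero,
    or_iff_left hc, neg_eq_zero, add_eq_zero_iff_eq_neg]

end AffineReflection

theorem apply_conj_of_apply_eq_self {G A : Type*} [Group G] {ρ : G → A → A}
    (hmul : ∀ g h x, ρ (g * h) x = ρ g (ρ h x)) (hone : ∀ x, ρ 1 x = x)
    {g : G} {x : A} (hx : ρ g x = x) (h : G) :
    ρ (h * g * h⁻¹) (ρ h x) = ρ h x := by
  rw [hmul, hmul, ← hmul h⁻¹, inv_mul_cancel, hone, hx]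

theorem reflection_action_implies_V21_general {G ι V A : Type*} [Group G]
    [AddCommGroup V] [Module ℝ V] [AddTorsor V A]
    (lf : ι → V →ₗ[ℝ] ℝ) (cv : ι → V) (rr : ι → ι → ι)
    (hlfr : ∀ α β, lf (rr α β) = lf β - lf β (cv α) • lf α)
    (hlf2 : ∀ α, lf α (cv α) = 2)
    (U : ι → Subgroup G) (n : ι → G → G) (φv : ι → G → WithTop ℝ)
    (htop : ∀ α, ∀ u ∈ U α, (φv α u = ⊤ ↔ u = 1))
    (hconjU : ∀ α β, ∀ u ∈ U α, u ≠ 1 → ∀ w ∈ U β,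
      n α u * w * (n α u)⁻¹ ∈ U (rr α β))
    (hconjn : ∀ α β, ∀ u ∈ U α, u ≠ 1 → ∀ w ∈ U β, w ≠ 1 →
      n (rr α β) (n α u * w * (n α u)⁻¹) = n α u * n β w * (n α u)⁻¹)
    (o : A) (ρ : G → A → A)
    (hmul : ∀ g h x, ρ (g * h) x = ρ g (ρ h x)) (hone : ∀ x, ρ 1 x = x)
    (href : ∀ α, ∀ u ∈ U α, u ≠ 1 → ∀ k : ℝ, φv α u = (k : WithTop ℝ) →
      ∀ x : A, ρ (n α u) x = (-(lf α (x -ᵥ o) + k)) • cv α +ᵥ x) :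
    ∀ α β, ∀ u ∈ U α, u ≠ 1 → ∀ w ∈ U β, w ≠ 1 →
      ∀ ru rw : ℝ, φv α u = (ru : WithTop ℝ) → φv β w = (rw : WithTop ℝ) →
        φv (rr α β) (n α u * w * (n α u)⁻¹)
          = ((rw - lf β (cv α) * ru : ℝ) : WithTop ℝ) := by
  intro α β u hu hu1 w hw hw1 ru rw hru hrw
  have hρ : ∀ γ, ∀ v ∈ U γ, v ≠ 1 → ∀ k : ℝ, φv γ v = k →
      ρ (n γ v) = affineReflection (lf γ) (cv γ) o k :=
    fun γ v hv hv1 k hk => funext (href γ v hv hv1 k hk)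
  set v := n α u * w * (n α u)⁻¹
  have hvU : v ∈ U (rr α β) := hconjU α β u hu hu1 w hw
  have hv1 : v ≠ 1 := mt conj_eq_one_iff.mp hw1
  obtain ⟨k, hk⟩ := WithTop.ne_top_iff_exists.mp (mt (htop _ v hvU).mp hv1)
  set x : A := (-(rw / 2)) • cv β +ᵥ o
  have hx : ρ (n β w) x = x := by
    rw [hρ β w hw hw1 rw hrw, affineReflection_eq_self_iff (hlf2 β)]
    simp [x, hlf2 β]
  have hy := apply_conj_of_apply_eq_self hmul hone hx (n α u)
  rw [← hconjn α β u hu hu1 w hw hw1, hρ _ v hvU hv1 k hk.symm,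
    affineReflection_eq_self_iff (hlf2 _), hρ α u hu hu1 ru hru, affineReflection_vsub] at hy
  simp only [x, hlfr, LinearMap.sub_apply, LinearMap.smul_apply, vadd_vsub, map_add, map_smul,
    smul_eq_mul, hlf2] at hy
  rw [← hk, WithTop.coe_inj]
  linear_combination hy

/-- If there is an affine space A under V, a base point o, and an action of N
on A by affine automorphisms such that each n(u) (u ∈ U_α \ {e}) acts as the
reflection with fixed hyperplane M(α, φ_α(u)) and linear part r_α, then the
family (φ_α) satisfies axiom (V2.1). -/
theorem reflection_action_implies_V21 {G ι V A : Type*} [Group G]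
    [AddCommGroup V] [Module ℝ V] [AddTorsor V A]
    (lf : ι → V →ₗ[ℝ] ℝ) (cv : ι → V) (rr : ι → ι → ι)
    (hlfr : ∀ α β, lf (rr α β) = lf β - lf β (cv α) • lf α)
    (hlf2 : ∀ α, lf α (cv α) = 2) (hcv : ∀ α, cv α ≠ 0)
    (U : ι → Subgroup G) (n : ι → G → G) (φv : ι → G → WithTop ℝ)
    (htop : ∀ α, ∀ u ∈ U α, (φv α u = ⊤ ↔ u = 1))
    (hconjU : ∀ α β, ∀ u ∈ U α, u ≠ 1 → ∀ w ∈ U β,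
      n α u * w * (n α u)⁻¹ ∈ U (rr α β))
    (hconjn : ∀ α β, ∀ u ∈ U α, u ≠ 1 → ∀ w ∈ U β, w ≠ 1 →
      n (rr α β) (n α u * w * (n α u)⁻¹) = n α u * n β w * (n α u)⁻¹)
    (o : A) (ρ : G → A → A)
    (hmul : ∀ g h x, ρ (g * h) x = ρ g (ρ h x)) (hone : ∀ x, ρ 1 x = x)
    (href : ∀ α, ∀ u ∈ U α, u ≠ 1 → ∀ k : ℝ, φv α u = (k : WithTop ℝ) →
      ∀ x : A, ρ (n α u) x = (-(lf α (x -ᵥ o) + k)) • cv α +ᵥ x) :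
    ∀ α β, ∀ u ∈ U α, u ≠ 1 → ∀ w ∈ U β, w ≠ 1 →
      ∀ ru rw : ℝ, φv α u = (ru : WithTop ℝ) → φv β w = (rw : WithTop ℝ) →
        φv (rr α β) (n α u * w * (n α u)⁻¹)
          = ((rw - lf β (cv α) * ru : ℝ) : WithTop ℝ) :=
  reflection_action_implies_V21_general lf cv rr hlfr hlf2 U n φv htop hconjU hconjn o ρ hmul hone
    href
end

section
/- Let Y be an affine space under a real vector space V. On the set of convex cones of Y of the form x + f⃗ with f⃗ a fixed convex cone of V, define f ∼ g iff f and g are parallel (same direction cone) and f ∩ g ≠ ∅. Then: (i) f ∼ g iff f ∩ g contains a subcone parallel to both f and g; (ii) for f = x + f⃗ and g = y + f⃗, f ∼ g iff the vector xy→ lies in the linear span of f⃗; (iii) ∼ is an equivalence relation, and the quotient is an affine space isomorphic to Y/Span(f⃗). -/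
/-!
Writing a point of `x + C` as `a +ᵥ x` with `a ∈ C`, the cones `x + C` and `y + C` meet exactly
when `x -ᵥ y ∈ C - C`, and for a nonempty convex cone `C` the set `C - C` is a subspace, hence
equal to `Span C`. If the cones meet at `w`, then `w + C` lies in both because `C + C ⊆ C`.
The relation is thus congruence of `x -ᵥ o` and `y -ᵥ o` modulo `Span C`.
-/

open Pointwise

/-- The cone of direction c based at x in the affine space Y. -/
def coneAt {V Y : Type*} [AddCommGroup V] [Module ℝ V] [AddTorsor V Y]
    (c : Set V) (x : Y) : Set Y :=
  (fun a => a +ᵥ x) '' c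

theorem Convex.add_mem_of_smul_mem {𝕜 M : Type*} [Field 𝕜] [LinearOrder 𝕜]
    [IsStrictOrderedRing 𝕜] [AddCommGroup M] [Module 𝕜 M] {s : Set M} (hs : Convex 𝕜 s)
    (hsmul : ∀ a ∈ s, ∀ r : 𝕜, 0 < r → r • a ∈ s) {a b : M} (ha : a ∈ s)
    (hb : b ∈ s) : a + b ∈ s := by
  have hmid : (2⁻¹ : 𝕜) • a + (2⁻¹ : 𝕜) • b ∈ s :=
    hs ha hb (by positivity) (by positivity) (by rw [← two_mul, mul_inv_cancel₀ two_ne_zero])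
  simpa [smul_add, smul_smul] using hsmul _ hmid 2 two_pos

theorem ConvexCone.coe_span_eq_sub {𝕜 M : Type*} [Ring 𝕜] [LinearOrder 𝕜]
    [AddLeftStrictMono 𝕜] [AddCommGroup M] [Module 𝕜 M] (C : ConvexCone 𝕜 M)
    (hC : (C : Set M).Nonempty) :
    (Submodule.span 𝕜 (C : Set M) : Set M) = C - C := by
  obtain ⟨c, hc⟩ := hC
  refine subset_antisymm (fun v hv => ?_) ?_
  · induction hv using Submodule.span_induction with
    | mem x hx => exact ⟨x + c, C.add_mem hx hc, c, hc, add_sub_cancel_right x c⟩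
    | zero => exact ⟨c, hc, c, hc, sub_self c⟩
    | add _ _ _ _ hu hv =>
      obtain ⟨a, ha, b, hb, rfl⟩ := hu
      obtain ⟨a', ha', b', hb', rfl⟩ := hv
      exact ⟨a + a', C.add_mem ha ha', b + b', C.add_mem hb hb', add_sub_add_comm ..⟩
    | smul r _ _ hv =>
      obtain ⟨a, ha, b, hb, rfl⟩ := hv
      rcases lt_trichotomy r 0 with hr | rfl | hr
      · refine ⟨(-r) • b, C.smul_mem (neg_pos.mpr hr) hb, (-r) • a,
          C.smul_mem (neg_pos.mpr hr) ha, ?_⟩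
        dsimp only
        rw [neg_smul, neg_smul, neg_sub_neg, smul_sub]
      · exact ⟨c, hc, c, hc, by dsimp only; rw [sub_self, zero_smul]⟩
      · exact ⟨r • a, C.smul_mem hr ha, r • b, C.smul_mem hr hb, (smul_sub r a b).symm⟩
  · rintro _ ⟨a, ha, b, hb, rfl⟩
    exact sub_mem (Submodule.subset_span ha) (Submodule.subset_span hb)

theorem AddSubgroup.equivalence_vsub_mem {V Y : Type*} [AddCommGroup V] [AddTorsor V Y]
    (p : AddSubgroup V) : Equivalence (fun x y : Y => x -ᵥ y ∈ p) where
  refl x := by rw [vsub_self]; exact p.zero_mem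
  symm h := by rw [← neg_vsub_eq_vsub_rev]; exact p.neg_mem h
  trans h₁ h₂ := by rw [← vsub_add_vsub_cancel]; exact p.add_mem h₁ h₂

section coneAt

variable {V Y : Type*} [AddCommGroup V] [Module ℝ V] [AddTorsor V Y]

theorem coneAt_inter_nonempty_iff_vsub_mem_sub (c : Set V) (x y : Y) :
    (coneAt c x ∩ coneAt c y).Nonempty ↔ x -ᵥ y ∈ c - c := by
  constructor
  · rintro ⟨_, ⟨a, ha, rfl⟩, b, hb, hab : b +ᵥ y = a +ᵥ x⟩
    refine ⟨b, hb, a, ha, ?_⟩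
    dsimp only
    rw [← vadd_vsub_vadd_cancel_left a, ← hab, vadd_vsub_vadd_cancel_right]
  · rintro ⟨b, hb, a, ha, hab : b - a = x -ᵥ y⟩
    refine ⟨a +ᵥ x, ⟨a, ha, rfl⟩, b, hb, ?_⟩
    show b +ᵥ y = a +ᵥ x
    rw [← vsub_vadd x y, ← hab, vadd_vadd, add_sub_cancel]

theorem ConvexCone.coneAt_vadd_subset (C : ConvexCone ℝ V) {a : V} (ha : a ∈ C) (x : Y) :
    coneAt (C : Set V) (a +ᵥ x) ⊆ coneAt C x := by
  rintro _ ⟨d, hd, rfl⟩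
  exact ⟨d + a, C.add_mem hd ha, (vadd_vadd d a x).symm⟩

theorem ConvexCone.coneAt_inter_nonempty_iff_exists_coneAt_subset (C : ConvexCone ℝ V)
    (hC : (C : Set V).Nonempty) (x y : Y) :
    (coneAt (C : Set V) x ∩ coneAt C y).Nonempty ↔
      ∃ z, coneAt (C : Set V) z ⊆ coneAt C x ∩ coneAt C y := by
  constructor
  · rintro ⟨_, ⟨a, ha, rfl⟩, b, hb, hab⟩
    change b +ᵥ y = a +ᵥ x at hab
    exact ⟨a +ᵥ x, Set.subset_inter (C.coneAt_vadd_subset ha x)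
      (hab ▸ C.coneAt_vadd_subset hb y)⟩
  · rintro ⟨z, hz⟩
    exact (hC.image _).mono hz

theorem ConvexCone.coneAt_inter_nonempty_iff_vsub_mem_span (C : ConvexCone ℝ V)
    (hC : (C : Set V).Nonempty) (x y : Y) :
    (coneAt (C : Set V) x ∩ coneAt C y).Nonempty ↔
      x -ᵥ y ∈ Submodule.span ℝ (C : Set V) := by
  rw [coneAt_inter_nonempty_iff_vsub_mem_sub, ← SetLike.mem_coe, C.coe_span_eq_sub hC]

end coneAt

/-- For a fixed nonempty convex cone c of V: (i) two parallel cones meet iff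
their intersection contains a parallel subcone; (ii) x + c and y + c meet iff
the vector between their base points lies in Span(c); (iii) the relation is an
equivalence, whose quotient is the affine space Y / Span(c). -/
theorem cone_equivalence_and_quotient {V Y : Type*} [AddCommGroup V]
    [Module ℝ V] [AddTorsor V Y]
    (c : Set V) (hne : c.Nonempty)
    (hcone : ∀ a ∈ c, ∀ r : ℝ, 0 < r → r • a ∈ c)
    (hconv : Convex ℝ c) :
    (∀ x y : Y, (coneAt c x ∩ coneAt c y).Nonempty ↔
        ∃ z : Y, coneAt c z ⊆ coneAt c x ∩ coneAt c y) ∧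
    (∀ x y : Y, (coneAt c x ∩ coneAt c y).Nonempty ↔
        x -ᵥ y ∈ Submodule.span ℝ c) ∧
    Equivalence (fun x y : Y => (coneAt c x ∩ coneAt c y).Nonempty) ∧
    ∀ o x y : Y, (coneAt c x ∩ coneAt c y).Nonempty ↔
        (Submodule.Quotient.mk (x -ᵥ o) : V ⧸ Submodule.span ℝ c)
          = Submodule.Quotient.mk (y -ᵥ o) := by
  let C : ConvexCone ℝ V :=
    ⟨c, fun r hr a ha => hcone a ha r hr,
      fun _ ha _ hb => hconv.add_mem_of_smul_mem hcone ha hb⟩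
  have hspan : ∀ x y : Y, (coneAt c x ∩ coneAt c y).Nonempty ↔
      x -ᵥ y ∈ Submodule.span ℝ c :=
    C.coneAt_inter_nonempty_iff_vsub_mem_span hne
  refine ⟨C.coneAt_inter_nonempty_iff_exists_coneAt_subset hne, hspan, ?_, fun o x y => ?_⟩
  · simp_rw [hspan]
    exact (Submodule.span ℝ c).toAddSubgroup.equivalence_vsub_mem
  · rw [hspan, Submodule.Quotient.eq, vsub_sub_vsub_cancel_right]
end

section
/- Let Q = (Q(a))_{a∈A} be a family of subgroups of a group G, with N a subgroup of G acting on a set A, such that Fix_N(a) ⊆ Q(a) for all a ∈ A. Define the relation on G × A by (g,a) ∼ (h,b) iff there exists n ∈ N with b = n·a and g⁻¹hn ∈ Q(a). Then ∼ is an equivalence relation if and only if for all n ∈ N and a ∈ A, n·Q(a)·n⁻¹ = Q(n·a). -/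
/-!
Write `(g, a) ∼ (h, b)` for the relation of the theorem. Reflexivity always holds, and the
conjugation condition `n Q(a) n⁻¹ ⊆ Q(n • a)` is exactly what transports the membership
`g⁻¹ h n ∈ Q(a)` along the inverse and the composite of the witnesses `n`, giving symmetry and
transitivity. Conversely, for `q ∈ Q(a)` both `(m⁻¹, m • a)` and `(q m⁻¹, m • a)` are related to
`(1, a)`; if `∼` is an equivalence they are related to each other, and since a witness for two
points over the same `b` fixes `b`, the hypothesis `Fix_N(b) ⊆ Q(b)` turns this into
`m q m⁻¹ ∈ Q(m • a)`. Applying the inclusion to `m⁻¹` gives the reverse one.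
-/

section HovelRel

variable {G A : Type*} [Group G] (N : Subgroup G) [MulAction N A] (Q : A → Subgroup G)

def hovelRel (p q : G × A) : Prop :=
  ∃ n : N, q.2 = n • p.2 ∧ p.1⁻¹ * q.1 * (n : G) ∈ Q p.2

def IsConjEquivariant : Prop :=
  ∀ (m : N) (a : A), ∀ x ∈ Q a, (m : G) * x * (m : G)⁻¹ ∈ Q (m • a)

variable {N Q}

theorem conj_image_eq_iff_isConjEquivariant :
    (∀ (m : N) (a : A),
      (fun x => (m : G) * x * (m : G)⁻¹) '' (Q a : Set G) = (Q (m • a) : Set G)) ↔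
      IsConjEquivariant N Q := by
  refine ⟨fun h m a x hx => ?_, fun h m a => ?_⟩
  · exact SetLike.mem_coe.1 (h m a ▸ Set.mem_image_of_mem _ hx)
  · refine Set.Subset.antisymm (Set.image_subset_iff.2 fun x => h m a x) fun x hx => ?_
    refine ⟨(m : G)⁻¹ * x * (m : G), ?_, by group⟩
    simpa using h m⁻¹ (m • a) x hx

theorem hovelRel_refl (p : G × A) : hovelRel N Q p p :=
  ⟨1, (one_smul _ _).symm, by simp⟩

theorem hovelRel_symm (hQ : IsConjEquivariant N Q) {p q : G × A} (h : hovelRel N Q p q) :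
    hovelRel N Q q p := by
  obtain ⟨n, hq, hmem⟩ := h
  refine ⟨n⁻¹, by rw [hq, inv_smul_smul], ?_⟩
  rw [hq]
  have := hQ n p.2 _ ((Q p.2).inv_mem hmem)
  rwa [show (n : G) * (p.1⁻¹ * q.1 * n)⁻¹ * (n : G)⁻¹ = q.1⁻¹ * p.1 * ((n⁻¹ : N) : G) by
    push_cast; group] at this

theorem hovelRel_trans (hQ : IsConjEquivariant N Q) {p q r : G × A}
    (hpq : hovelRel N Q p q) (hqr : hovelRel N Q q r) : hovelRel N Q p r := by
  obtain ⟨n₁, hq, hpq⟩ := hpq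
  obtain ⟨n₂, hr, hqr⟩ := hqr
  refine ⟨n₂ * n₁, by rw [hr, hq, mul_smul], ?_⟩
  have hqr' := hQ n₁⁻¹ q.2 _ hqr
  rw [hq, inv_smul_smul] at hqr'
  have := (Q p.2).mul_mem hpq hqr'
  rwa [show p.1⁻¹ * q.1 * n₁ * ((n₁⁻¹ : N) * (q.1⁻¹ * r.1 * n₂) * ((n₁⁻¹ : N) : G)⁻¹) =
    p.1⁻¹ * r.1 * ((n₂ * n₁ : N) : G) by push_cast; group] at this

theorem equivalence_hovelRel (hQ : IsConjEquivariant N Q) : Equivalence (hovelRel N Q) :=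
  ⟨hovelRel_refl, hovelRel_symm hQ, hovelRel_trans hQ⟩

theorem hovelRel_mk_smul {a : A} {q : G} (hq : q ∈ Q a) (g : G) (m : N) :
    hovelRel N Q (g, a) (g * q * (m : G)⁻¹, m • a) :=
  ⟨m, rfl, by simpa [mul_assoc] using hq⟩

theorem hovelRel_same_snd_iff (hfix : ∀ (a : A) (m : N), m • a = a → (m : G) ∈ Q a)
    {g h : G} {b : A} : hovelRel N Q (g, b) (h, b) ↔ g⁻¹ * h ∈ Q b := by
  refine ⟨fun ⟨n, hn, hmem⟩ => ?_, fun hmem => ⟨1, (one_smul _ _).symm, by simpa using hmem⟩⟩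
  simpa using (Q b).mul_mem hmem ((Q b).inv_mem (hfix b n hn.symm))

theorem isConjEquivariant_of_equivalence (hfix : ∀ (a : A) (m : N), m • a = a → (m : G) ∈ Q a)
    (hEq : Equivalence (hovelRel N Q)) : IsConjEquivariant N Q := by
  intro m a q hq
  have h₁ := hovelRel_mk_smul (Q a).one_mem 1 m
  have h₂ := hovelRel_mk_smul hq 1 m
  have := (hovelRel_same_snd_iff hfix).1 (hEq.trans (hEq.symm h₁) h₂)
  simpa [mul_assoc] using this

end HovelRel

/-- Let Q = (Q(a)) be a family of subgroups of G with N acting on A and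
Fix_N(a) ⊆ Q(a). The relation (g,a) ∼ (h,b) iff ∃ n ∈ N with b = n·a and
g⁻¹hn ∈ Q(a) is an equivalence relation iff n Q(a) n⁻¹ = Q(n·a) for all n, a. -/
theorem hovel_relation_equivalence_iff {G A : Type*} [Group G]
    (N : Subgroup G) [MulAction N A] (Q : A → Subgroup G)
    (h02 : ∀ (a : A) (m : N), m • a = a → (m : G) ∈ Q a) :
    Equivalence (fun p q : G × A =>
        ∃ n : N, q.2 = n • p.2 ∧ p.1⁻¹ * q.1 * (n : G) ∈ Q p.2) ↔
      ∀ (m : N) (a : A),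
        (fun x => (m : G) * x * (m : G)⁻¹) '' (Q a : Set G) = (Q (m • a) : Set G) := by
  rw [conj_image_eq_iff_isConjEquivariant]
  exact ⟨isConjEquivariant_of_equivalence h02, equivalence_hovelRel⟩
end
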